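/- Let q ≥ 1 be an integer and let w : ℕ → ℝ be a nonnegative completely multiplicative function (w(1) = 1, w(mn) = w(m)w(n) for all m,n ≥ 1) which is summable, i.e. ∑_{a ≥ 1} w(a) < ∞. Then for every positive integer n with gcd(n,q) = 1, one has ∑_{a,b ≥ 1, n·a ≡ b (mod q)} w(a) w(b) ≥ w(n) · ∑_{a,b ≥ 1, a ≡ b (mod q)} w(a) w(b). -/

import Mathlib

/-! Multiplying the second coordinate by `n` maps the pairs with `a ≡ b` injectively to pairs
with `n * a ≡ n * b`, and by complete multiplicativity it multiplies their weight `w a * w b`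
by `w n`; the remaining terms of the right-hand sum are nonnegative. -/

theorem Summable.ite_zero {α : Type*} {f : α → ℝ} (hf : Summable f) (P : α → Prop)
    [DecidablePred P] : Summable fun a => if P a then f a else 0 :=
  (hf.indicator {a | P a}).congr fun a => by simp only [Set.indicator_apply, Set.mem_ofPred_eq]

theorem mul_ite_modEq_le_ite_mul_modEq {q n : ℕ} {w : ℕ → ℝ} (hw0 : ∀ n, 0 ≤ w n)
    (hmul : ∀ m n : ℕ, 1 ≤ m → 1 ≤ n → w (m * n) = w m * w n) (hn : 1 ≤ n) (a b : ℕ) :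
    w n * (if 1 ≤ a ∧ 1 ≤ b ∧ a ≡ b [MOD q] then w a * w b else 0) ≤
      if 1 ≤ a ∧ 1 ≤ n * b ∧ n * a ≡ n * b [MOD q] then w a * w (n * b) else 0 := by
  by_cases h : 1 ≤ a ∧ 1 ≤ b ∧ a ≡ b [MOD q]
  · obtain ⟨ha, hb, hab⟩ := h
    have hnb : 1 ≤ n * b := Nat.one_le_iff_ne_zero.2 (by positivity)
    rw [if_pos ⟨ha, hb, hab⟩, if_pos ⟨ha, hnb, hab.mul_left n⟩, hmul n b hn hb]
    exact le_of_eq (by ring)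
  · rw [if_neg h, mul_zero]
    exact ite_nonneg (mul_nonneg (hw0 _) (hw0 _)) le_rfl

theorem resonator_shift_inequality_general (q : ℕ) (w : ℕ → ℝ)
    (hw0 : ∀ n, 0 ≤ w n)
    (hmul : ∀ m n : ℕ, 1 ≤ m → 1 ≤ n → w (m * n) = w m * w n)
    (hsum : Summable w)
    (n : ℕ) (hn : 1 ≤ n) :
    w n * ∑' p : ℕ × ℕ,
        (if 1 ≤ p.1 ∧ 1 ≤ p.2 ∧ p.1 ≡ p.2 [MOD q] then w p.1 * w p.2 else 0) ≤
      ∑' p : ℕ × ℕ,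
        (if 1 ≤ p.1 ∧ 1 ≤ p.2 ∧ n * p.1 ≡ p.2 [MOD q] then w p.1 * w p.2 else 0) := by
  have hW : Summable fun p : ℕ × ℕ => w p.1 * w p.2 := hsum.mul_of_nonneg hsum hw0 hw0
  have hscale : Function.Injective (Prod.map id (n * ·) : ℕ × ℕ → ℕ × ℕ) :=
    Function.injective_id.prodMap (mul_right_injective₀ (by omega))
  rw [← tsum_mul_left]
  exact Summable.tsum_le_tsum_of_inj _ hscale
    (fun _ _ => ite_nonneg (mul_nonneg (hw0 _) (hw0 _)) le_rfl)
    (fun p => mul_ite_modEq_le_ite_mul_modEq hw0 hmul hn p.1 p.2)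
    ((hW.ite_zero _).mul_left _) (hW.ite_zero _)

theorem resonator_shift_inequality (q : ℕ) (hq : 1 ≤ q) (w : ℕ → ℝ)
    (hw0 : ∀ n, 0 ≤ w n) (hw1 : w 1 = 1)
    (hmul : ∀ m n : ℕ, 1 ≤ m → 1 ≤ n → w (m * n) = w m * w n)
    (hsum : Summable w)
    (n : ℕ) (hn : 1 ≤ n) (hnq : Nat.Coprime n q) :
    w n * ∑' p : ℕ × ℕ,
        (if 1 ≤ p.1 ∧ 1 ≤ p.2 ∧ p.1 ≡ p.2 [MOD q] then w p.1 * w p.2 else 0) ≤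
      ∑' p : ℕ × ℕ,
        (if 1 ≤ p.1 ∧ 1 ≤ p.2 ∧ n * p.1 ≡ p.2 [MOD q] then w p.1 * w p.2 else 0) :=
  resonator_shift_inequality_general q w hw0 hmul hsum n hn
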